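/- Let n and k be natural numbers with 0 < k < n, let a_{k+1}, …, a_n be integers ≥ 1, and let d = gcd(a_{k+1}, …, a_n). In the free abelian group G = ((Fin k × Fin (n−k)) → ℤ), with coordinates indexed by pairs (i,l) with 1 ≤ i ≤ k and 1 ≤ l ≤ n−k, let H be the subgroup generated by the following n vectors: for each y ∈ {1,…,k}, the vector C_y whose (i,l)-entry is a_{k+l} if i = y and 0 otherwise; and for each l₀ ∈ {1,…,n−k}, the vector D_{l₀} whose (i,l)-entry is 1 if l = l₀ and 0 otherwise. Then the quotient group G/H is isomorphic to ℤ^{k(n−k)−(n−1)} × (ℤ/dℤ)^{k−1}. (This quotient is the divisor class group cl(S) ≅ cl(K[S]) of the normal positive monoid S = ⟨u₁,…,uₙ | u₁⋯u_k = u_{k+1}^{a_{k+1}}⋯u_n^{a_n}⟩: the coordinates of G correspond to the minimal primes P_{y,z} of S, the vector C_y is the divisor of u_y, and D_{l₀} is the divisor of u_{k+l₀}.) -/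

import Mathlib

/-- `d = gcd(a_{k+1}, …, a_n)`. -/
def dGcd (n k : ℕ) (a : Fin n → ℕ) : ℕ :=
  Finset.univ.gcd fun l : Fin (n - k) => a ⟨k + l.val, by have := l.isLt; omega⟩

/-- For `y ∈ {1,…,k}`, the vector `C_y ∈ ℤ^{k(n-k)}` whose `(i,l)`-entry is `a_{k+l}`
if `i = y` and `0` otherwise (the divisor of `u_y`). -/
def vecC (n k : ℕ) (a : Fin n → ℕ) (y : Fin k) : (Fin k × Fin (n - k)) → ℤ :=
  fun p => if p.1 = y then (a ⟨k + p.2.val, by have := p.2.isLt; omega⟩ : ℤ) else 0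

/-- For `l₀ ∈ {1,…,n-k}`, the vector `D_{l₀} ∈ ℤ^{k(n-k)}` whose `(i,l)`-entry is `1`
if `l = l₀` and `0` otherwise (the divisor of `u_{k+l₀}`). -/
def vecD (n k : ℕ) (l₀ : Fin (n - k)) : (Fin k × Fin (n - k)) → ℤ :=
  fun p => if p.2 = l₀ then 1 else 0

/-!
View `G` as `k`-tuples of rows in `ℤ^{n-k}`. The `D_l` span the tuples with all rows equal, so
`x ↦ (x_j - x_{i₀})_{j ≠ i₀}` identifies `G/⟨D⟩` with `(ℤ^{n-k})^{k-1}`; there `C_y` becomes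
`α = (a_{k+1}, …, a_n)` in slot `y`, or `-α` in every slot when `y = i₀`, hence
`G/H ≅ (ℤ^{n-k}/ℤα)^{k-1}`. By Bézout `α = d • β` with `f β = 1` for some functional `f`, so
`ℤ^{n-k} = ℤβ ⊕ ker f` and `ℤ^{n-k}/ℤα ≅ ℤ/d × ℤ^{n-k-1}`.
-/

open Submodule

section RowDifferences

variable {R M ι : Type*} [CommRing R] [AddCommGroup M] [Module R M]

def rowDiffMkQ (α : M) (i₀ : ι) : (ι → M) →ₗ[R] ({j // j ≠ i₀} → M ⧸ R ∙ α) :=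
  LinearMap.pi fun j =>
    (R ∙ α).mkQ ∘ₗ (LinearMap.proj (R := R) (φ := fun _ => M) j.1 - LinearMap.proj i₀)

variable (α : M) (i₀ : ι)

theorem rowDiffMkQ_apply (x : ι → M) (j : {j // j ≠ i₀}) :
    rowDiffMkQ (R := R) α i₀ x j = Submodule.Quotient.mk (x j - x i₀) :=
  rfl

theorem rowDiffMkQ_surjective [DecidableEq ι] : Function.Surjective (rowDiffMkQ (R := R) α i₀) := by
  intro z
  choose x hx using fun j => Submodule.Quotient.mk_surjective _ (z j)
  refine ⟨fun i => if h : i = i₀ then 0 else x ⟨i, h⟩, funext fun j => ?_⟩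
  simp [rowDiffMkQ_apply, j.2, hx]

theorem ker_rowDiffMkQ [DecidableEq ι] [Fintype ι] :
    LinearMap.ker (rowDiffMkQ (R := R) α i₀) =
      span R (Set.range fun y => Pi.single y α) ⊔ LinearMap.range (LinearMap.const (R := R)) := by
  apply le_antisymm
  · intro x hx
    have hrow : ∀ j, x j - x i₀ ∈ R ∙ α := by
      intro j
      rcases eq_or_ne j i₀ with rfl | hj
      · simp
      · have := congrFun (LinearMap.mem_ker.mp hx) ⟨j, hj⟩
        rwa [rowDiffMkQ_apply, Pi.zero_apply, Submodule.Quotient.mk_eq_zero] at this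
    choose c hc using fun j => mem_span_singleton.mp (hrow j)
    have hx : x = ∑ j, c j • Pi.single j α + Function.const ι (x i₀) := by
      funext i
      simp [Finset.sum_apply, Pi.single_apply, hc]
    rw [hx]
    exact add_mem_sup (sum_mem fun j _ => smul_mem _ _ (subset_span ⟨j, rfl⟩)) ⟨x i₀, rfl⟩
  · rw [sup_le_iff, span_le]
    refine ⟨?_, ?_⟩
    · rintro _ ⟨y, rfl⟩
      ext j
      rcases eq_or_ne y i₀ with rfl | hy
      · simp [rowDiffMkQ_apply, j.2]
      · by_cases hjy : (j : ι) = y <;> simp [rowDiffMkQ_apply, hjy, hy]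
    · rintro _ ⟨v, rfl⟩
      ext j
      simp [rowDiffMkQ_apply]

noncomputable def quotientRowDiffEquiv [DecidableEq ι] [Fintype ι] :
    ((ι → M) ⧸ span R (Set.range fun y => Pi.single y α) ⊔ LinearMap.range LinearMap.const) ≃ₗ[R]
      ({j // j ≠ i₀} → M ⧸ R ∙ α) :=
  (quotEquivOfEq _ _ (ker_rowDiffMkQ α i₀).symm).trans
    ((rowDiffMkQ α i₀).quotKerEquivOfSurjective (rowDiffMkQ_surjective α i₀))

end RowDifferences

theorem map_curry_span_rows_cols {R ι κ : Type*} [CommRing R] [DecidableEq ι] [DecidableEq κ]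
    [Fintype κ] (α : κ → R) :
    (span R (Set.range (fun (y : ι) (p : ι × κ) => if p.1 = y then α p.2 else 0) ∪
        Set.range fun (l₀ : κ) (p : ι × κ) => if p.2 = l₀ then 1 else 0)).map
        (LinearEquiv.curry R R ι κ).toLinearMap =
      span R (Set.range fun y => Pi.single y α) ⊔ LinearMap.range LinearMap.const := by
  rw [map_span, Set.image_union, ← Set.range_comp, ← Set.range_comp, span_union]
  congr 1
  · congr
    funext y i l
    by_cases h : i = y
    · subst h; simp
    · simp [h]
  · have hcols : (LinearEquiv.curry R R ι κ).toLinearMap ∘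
          (fun l₀ (p : ι × κ) => if p.2 = l₀ then (1 : R) else 0) =
        LinearMap.const (R := R) (ι := ι) ∘ Pi.basisFun R κ := by
      funext l₀ i l
      simp [Pi.single_apply]
    rw [hcols, Set.range_comp, ← map_span, (Pi.basisFun R κ).span_eq, LinearMap.range_eq_map]

section Splitting

variable {R M : Type*} [CommRing R] [AddCommGroup M] [Module R M] {f : M →ₗ[R] R} {β : M}

def splitMkQ (hβ : f β = 1) (d : R) : M →ₗ[R] (R ⧸ Ideal.span {d}) × LinearMap.ker f :=
  ((Ideal.span {d}).mkQ ∘ₗ f).prod <|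
    (LinearMap.id - LinearMap.toSpanSingleton R M β ∘ₗ f).codRestrict _ fun x => by simp [hβ]

variable (hβ : f β = 1) (d : R)

theorem splitMkQ_apply (x : M) :
    splitMkQ hβ d x = (Ideal.Quotient.mk _ (f x), ⟨x - f x • β, by simp [hβ]⟩) :=
  rfl

theorem splitMkQ_surjective : Function.Surjective (splitMkQ hβ d) := by
  rintro ⟨r, y, hy⟩
  obtain ⟨r, rfl⟩ := Ideal.Quotient.mk_surjective r
  have hf : f (r • β + y) = r := by simp [hβ, LinearMap.mem_ker.mp hy]
  exact ⟨r • β + y, by simp [splitMkQ_apply, hf]⟩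

theorem ker_splitMkQ : LinearMap.ker (splitMkQ hβ d) = R ∙ (d • β) := by
  ext x
  simp only [LinearMap.mem_ker, splitMkQ_apply, Prod.mk_eq_zero, Ideal.Quotient.eq_zero_iff_mem,
    Ideal.mem_span_singleton', mem_span_singleton, Submodule.mk_eq_zero, sub_eq_zero]
  constructor
  · rintro ⟨⟨c, hc⟩, hx⟩
    exact ⟨c, by rw [hx, ← hc, mul_smul]⟩
  · rintro ⟨c, rfl⟩
    simp [hβ, mul_smul]

noncomputable def quotientSpanSmulEquiv :
    (M ⧸ R ∙ (d • β)) ≃ₗ[R] (R ⧸ Ideal.span {d}) × LinearMap.ker f :=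
  (quotEquivOfEq _ _ (ker_splitMkQ hβ d).symm).trans
    ((splitMkQ hβ d).quotKerEquivOfSurjective (splitMkQ_surjective hβ d))

end Splitting

theorem nonempty_linearEquiv_ker_of_apply_eq_one {R M : Type*} [CommRing R] [IsDomain R]
    [IsPrincipalIdealRing R] [AddCommGroup M] [Module R M] [Module.Free R M] [Module.Finite R M]
    {f : M →ₗ[R] R} {β : M} (hβ : f β = 1) :
    Nonempty (LinearMap.ker f ≃ₗ[R] (Fin (Module.finrank R M - 1) → R)) := by
  have hsurj : Function.Surjective f := fun r => ⟨r • β, by simp [hβ]⟩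
  have hrank := (LinearMap.ker f).finrank_quotient_add_finrank
  rw [(f.quotKerEquivOfSurjective hsurj).finrank_eq, Module.finrank_self] at hrank
  exact ⟨(Module.finBasisOfFinrankEq R _ (by omega)).equivFun⟩

theorem Finset.natCast_gcd {κ : Type*} (s : Finset κ) (α : κ → ℕ) :
    ((s.gcd α : ℕ) : ℤ) = s.gcd fun i => (α i : ℤ) := by
  classical
  induction s using Finset.induction with
  | empty => simp
  | insert a s ha ih =>
    rw [Finset.gcd_insert, Finset.gcd_insert, ← ih, ← Int.coe_gcd, Int.gcd_natCast_natCast]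
    rfl

theorem exists_eq_gcd_smul_of_apply_eq_one {κ : Type*} [Fintype κ] (α : κ → ℕ)
    (hα : Finset.univ.gcd α ≠ 0) :
    ∃ (f : (κ → ℤ) →ₗ[ℤ] ℤ) (β : κ → ℤ),
      (fun l => (α l : ℤ)) = ((Finset.univ.gcd α : ℕ) : ℤ) • β ∧ f β = 1 := by
  set d : ℤ := ((Finset.univ.gcd α : ℕ) : ℤ) with hd_def
  have hd : d ≠ 0 := Nat.cast_ne_zero.mpr hα
  obtain ⟨g, hg⟩ := Finset.gcd_eq_sum_mul Finset.univ fun l => (α l : ℤ)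
  have hdvd : ∀ l, d ∣ α l := fun l =>
    Int.natCast_dvd_natCast.mpr (Finset.gcd_dvd (Finset.mem_univ l))
  have hαβ : (fun l => (α l : ℤ)) = d • fun l => α l / d :=
    funext fun l => (Int.mul_ediv_cancel' (hdvd l)).symm
  set f := Fintype.linearCombination ℤ g
  refine ⟨f, _, hαβ, mul_left_cancel₀ hd ?_⟩
  calc d * f (fun l => α l / d) = f fun l => (α l : ℤ) := by rw [hαβ, map_smul, smul_eq_mul]
    _ = d * 1 := by simp [f, Fintype.linearCombination_apply, hd_def, Finset.natCast_gcd, hg]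

theorem nonempty_quotient_span_natCast_equiv {κ : Type*} [Fintype κ] (α : κ → ℕ)
    (hα : Finset.univ.gcd α ≠ 0) :
    Nonempty (((κ → ℤ) ⧸ ℤ ∙ fun l => (α l : ℤ)) ≃ₗ[ℤ]
      ZMod (Finset.univ.gcd α) × (Fin (Fintype.card κ - 1) → ℤ)) := by
  obtain ⟨f, β, hαβ, hβ⟩ := exists_eq_gcd_smul_of_apply_eq_one α hα
  obtain ⟨eK⟩ := nonempty_linearEquiv_ker_of_apply_eq_one hβ
  rw [Module.finrank_fintype_fun_eq_card] at eK
  rw [hαβ]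
  exact ⟨(quotientSpanSmulEquiv hβ _).trans <|
    (Int.quotientSpanNatEquivZMod _).toAddEquiv.toIntLinearEquiv.prodCongr eK⟩

theorem nonempty_arrow_prod_addEquiv {ι A B : Type*} [Fintype ι] [AddCommGroup A] [AddCommGroup B]
    {p q N : ℕ} (hp : Fintype.card ι = p) (hN : p * q = N) :
    Nonempty ((ι → A × (Fin q → B)) ≃+ (Fin N → B) × (Fin p → A)) := by
  let eι : ι ≃ Fin p := Fintype.equivFinOfCardEq hp
  let e : (ι → A × (Fin q → B)) ≃ (Fin N → B) × (Fin p → A) :=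
    (Equiv.arrowProdEquivProdArrow _ _ _).trans <| (Equiv.prodComm _ _).trans <|
      Equiv.prodCongr
        ((Equiv.curry _ _ _).symm.trans <|
          Equiv.arrowCongr ((eι.prodCongr (Equiv.refl _)).trans (finProdFinEquiv.trans (finCongr hN)))
            (Equiv.refl _))
        (Equiv.arrowCongr eι (Equiv.refl _))
  exact ⟨{ e with map_add' := fun _ _ => rfl }⟩

theorem Nat.sub_one_mul_sub_one_eq (k m : ℕ) : (k - 1) * (m - 1) = k * m - (k + m - 1) := by
  rcases k with _ | k
  · simp
  rcases m with _ | m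
  · simp
  rw [Nat.add_sub_cancel, Nat.add_sub_cancel, show k + 1 + (m + 1) - 1 = k + m + 1 by omega]
  exact (Nat.sub_eq_of_eq_add (by ring)).symm

theorem stmt6 (n k : ℕ) (hk : 0 < k) (hkn : k < n)
    (a : Fin n → ℕ) (ha : ∀ i : Fin n, k ≤ i.val → 1 ≤ a i)
    (H : AddSubgroup ((Fin k × Fin (n - k)) → ℤ))
    (hH : H = AddSubgroup.closure (Set.range (vecC n k a) ∪ Set.range (vecD n k))) :
    Nonempty ((((Fin k × Fin (n - k)) → ℤ) ⧸ H) ≃+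
      ((Fin (k * (n - k) - (n - 1)) → ℤ) × (Fin (k - 1) → ZMod (dGcd n k a)))) := by
  classical
  set α : Fin (n - k) → ℕ := fun l => a ⟨k + l.val, by omega⟩
  have hd : Finset.univ.gcd α ≠ 0 := fun h =>
    Nat.pos_iff_ne_zero.mp (ha ⟨k + 0, by omega⟩ le_rfl)
      (Finset.gcd_eq_zero_iff.mp h ⟨0, by omega⟩ (Finset.mem_univ _))
  obtain ⟨eα⟩ := nonempty_quotient_span_natCast_equiv α hd
  let i₀ : Fin k := ⟨0, hk⟩
  obtain ⟨eProd⟩ := nonempty_arrow_prod_addEquiv (ι := {j // j ≠ i₀}) (A := ZMod (dGcd n k a))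
    (B := ℤ) (p := k - 1) (q := Fintype.card (Fin (n - k)) - 1) (N := k * (n - k) - (n - 1))
    (by simp)
    (by rw [Fintype.card_fin, Nat.sub_one_mul_sub_one_eq]; congr 2; omega)
  have hspan := map_curry_span_rows_cols (ι := Fin k) fun l => (α l : ℤ)
  subst hH
  -- `G ⧸ p.toAddSubgroup` is `G ⧸ p` by definition, and `vecC`, `vecD` unfold to the vectors
  -- of `map_curry_span_rows_cols`.
  rw [← Submodule.span_int_eq_addSubgroupClosure]
  exact ⟨((Submodule.Quotient.equiv _ _ _ hspan).trans <| (quotientRowDiffEquiv _ i₀).trans <|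
    LinearEquiv.piCongrRight fun _ => eα).toAddEquiv.trans eProd⟩
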